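/- arXiv:1609.02726 — 5 statements merged into one kernel-verified Lean document; each statement's English description precedes it below -/
import Mathlib

section
/- For every finite simple graph G, there exists a proper coloring of G achieving the chromatic sum Σ(G) and using at most Δ(G)+1 colors; equivalently, the chromatic strength satisfies s(G) ≤ Δ(G)+1. -/
/-- A proper coloring of `G` with positive natural-number colors. -/
def IsProperColoring {V : Type*} (G : SimpleGraph V) (c : V → ℕ) : Prop :=
  (∀ u v, G.Adj u v → c u ≠ c v) ∧ ∀ v, 1 ≤ c v

/-- The chromatic sum `Σ(G)`: the minimum over proper colorings of
`∑_v c v = ∑_i i · |X_i|`. -/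
noncomputable def chromaticSum {V : Type*} [Fintype V] (G : SimpleGraph V) : ℕ :=
  sInf { s | ∃ c : V → ℕ, IsProperColoring G c ∧ s = ∑ v, c v }

/-- The chromatic strength `s(G)`: the minimum `k` such that some proper
coloring with colors in `{1,…,k}` achieves the chromatic sum. -/
noncomputable def strength {V : Type*} [Fintype V] (G : SimpleGraph V) : ℕ :=
  sInf { k | ∃ c : V → ℕ, IsProperColoring G c ∧ (∀ v, c v ≤ k) ∧
    ∑ v, c v = chromaticSum G }

/-!
Take a proper coloring `c` attaining `Σ(G)`. If some vertex `v` had `c v > deg v + 1`, then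
one of the colors `1, …, deg v + 1` is missing on the neighbors of `v`; recoloring `v` with it
keeps the coloring proper and strictly lowers the sum. Hence `c v ≤ deg v + 1 ≤ Δ(G) + 1`.
-/

open Finset

lemma Finset.exists_pos_le_card_add_one_notMem (s : Finset ℕ) :
    ∃ k, 1 ≤ k ∧ k ≤ #s + 1 ∧ k ∉ s := by
  have hlt : #s < #(Icc 1 (#s + 1)) := by simp
  obtain ⟨k, hk, hks⟩ := exists_mem_notMem_of_card_lt_card hlt
  rw [mem_Icc] at hk
  exact ⟨k, hk.1, hk.2, hks⟩

lemma Finset.sum_update_lt {ι : Type*} [Fintype ι] [DecidableEq ι] (c : ι → ℕ) {v : ι} {k : ℕ}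
    (hk : k < c v) : ∑ u, Function.update c v k u < ∑ u, c u := by
  rw [sum_update_of_mem (mem_univ v), ← add_sum_erase _ c (mem_univ v),
    sdiff_singleton_eq_erase]
  omega

section Coloring

variable {V : Type*} {G : SimpleGraph V}

lemma exists_isProperColoring [Finite V] : ∃ c : V → ℕ, IsProperColoring G c := by
  obtain ⟨n, ⟨e⟩⟩ := Finite.exists_equiv_fin V
  refine ⟨fun v => e v + 1, fun u v huv h => G.ne_of_adj huv (e.injective ?_),
    fun _ => le_add_self⟩
  exact Fin.ext (Nat.add_right_cancel h)

lemma exists_isProperColoring_sum_eq_chromaticSum [Fintype V] :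
    ∃ c : V → ℕ, IsProperColoring G c ∧ ∑ v, c v = chromaticSum G := by
  obtain ⟨c, hc⟩ := exists_isProperColoring (G := G)
  obtain ⟨c, hc, hsum⟩ : chromaticSum G ∈ _ := Nat.sInf_mem ⟨_, c, hc, rfl⟩
  exact ⟨c, hc, hsum.symm⟩

lemma IsProperColoring.update [DecidableEq V] {c : V → ℕ} (hc : IsProperColoring G c) {v : V}
    {k : ℕ} (hk : 1 ≤ k) (hfree : ∀ w, G.Adj v w → c w ≠ k) :
    IsProperColoring G (Function.update c v k) := by
  refine ⟨fun u w huw => ?_, fun u => ?_⟩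
  · rcases eq_or_ne u v with rfl | hu
    · rw [Function.update_of_ne (G.ne_of_adj huw).symm, Function.update_self]
      exact (hfree w huw).symm
    rcases eq_or_ne w v with rfl | hw
    · rw [Function.update_of_ne hu, Function.update_self]
      exact hfree u huw.symm
    rw [Function.update_of_ne hu, Function.update_of_ne hw]
    exact hc.1 u w huw
  · rcases eq_or_ne u v with rfl | hu
    · rwa [Function.update_self]
    · rw [Function.update_of_ne hu]
      exact hc.2 u

variable [Fintype V] [DecidableRel G.Adj]

lemma IsProperColoring.le_degree_add_one_of_sum_eq_chromaticSum {c : V → ℕ}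
    (hc : IsProperColoring G c) (hsum : ∑ v, c v = chromaticSum G) (v : V) :
    c v ≤ G.degree v + 1 := by
  classical
  obtain ⟨k, hk1, hkcard, hkfree⟩ :=
    ((G.neighborFinset v).image c).exists_pos_le_card_add_one_notMem
  have hkdeg : k ≤ G.degree v + 1 :=
    hkcard.trans (by simpa using card_image_le (s := G.neighborFinset v) (f := c))
  by_contra! hv
  have hfree : ∀ w, G.Adj v w → c w ≠ k := fun w hw hck =>
    hkfree (mem_image.2 ⟨w, (G.mem_neighborFinset v w).2 hw, hck⟩)
  have hmin : chromaticSum G ≤ ∑ u, Function.update c v k u :=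
    Nat.sInf_le ⟨_, hc.update hk1 hfree, rfl⟩
  have hlt := sum_update_lt c (v := v) (k := k) (by omega)
  omega

end Coloring

/-- there is a proper coloring achieving the chromatic sum that
uses at most `Δ(G) + 1` colors; equivalently, `s(G) ≤ Δ(G) + 1`. -/
theorem strength_stmt_2 {V : Type*} [Fintype V] (G : SimpleGraph V)
    [DecidableRel G.Adj] :
    (∃ c : V → ℕ, IsProperColoring G c ∧ (∀ v, c v ≤ G.maxDegree + 1) ∧
      ∑ v, c v = chromaticSum G) ∧
    strength G ≤ G.maxDegree + 1 := by
  obtain ⟨c, hc, hsum⟩ := exists_isProperColoring_sum_eq_chromaticSum (G := G)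
  have hbound (v : V) : c v ≤ G.maxDegree + 1 :=
    (hc.le_degree_add_one_of_sum_eq_chromaticSum hsum v).trans
      (Nat.add_le_add_right (G.degree_le_maxDegree v) 1)
  exact ⟨⟨c, hc, hbound, hsum⟩, Nat.sInf_le ⟨c, hc, hbound, hsum⟩⟩
end

section
/- Let n, k be integers with 1 ≤ k ≤ n, and let p and q be motifs of n with exactly k parts such that p is a major motif and p[1] = q[1]. Then p dominates q. -/
/-!
Write `p = (λ, …, λ, r, 1, …, 1)` with `β` copies of `λ`. For `t ≤ β` the first `t` entries
of `p` all equal `λ = q[1]`, which bounds every entry of the non-increasing `q`. For `t > β`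
the entries of `p` after position `t` are all `1`, the least a part can be, so the tail of `q`
outweighs the tail of `p`; since both sum to `n`, the head of `p` outweighs the head of `q`.
-/

/-- A motif of `n`: a non-increasing sequence (list) of positive integers summing to `n`. -/
def IsMotif (n : ℕ) (p : List ℕ) : Prop :=
  p.Pairwise (· ≥ ·) ∧ (∀ x ∈ p, 0 < x) ∧ p.sum = n

/-- `p` dominates `q`. -/
def Dominates (p q : List ℕ) : Prop :=
  ∀ t, 1 ≤ t → t ≤ min p.length q.length → (q.take t).sum ≤ (p.take t).sum

/-- The major motif of `n` with `k` parts and first entry `lam`: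
`β = ⌊(n−k)/(lam−1)⌋` copies of `lam`, then `n − β·lam − (k−β−1)`,
then `k − β − 1` ones. -/
def majorMotif (n k lam : ℕ) : List ℕ :=
  List.replicate ((n - k) / (lam - 1)) lam ++
    (n - ((n - k) / (lam - 1)) * lam - (k - (n - k) / (lam - 1) - 1)) ::
      List.replicate (k - (n - k) / (lam - 1) - 1) 1

/-- `p` is a major motif of `n` with `k` parts: for some admissible first
entry `lam` (with `1 < lam` and `⌈n/k⌉ ≤ lam ≤ n − k + 1`), `p = majorMotif n k lam`. -/
def IsMajorMotif (n k : ℕ) (p : List ℕ) : Prop :=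
  ∃ lam : ℕ, 1 < lam ∧ (n + k - 1) / k ≤ lam ∧ lam ≤ n - k + 1 ∧
    p = majorMotif n k lam

namespace List

theorem le_headI_of_pairwise_ge {α : Type*} [Preorder α] [Inhabited α] {l : List α}
    (hl : l.Pairwise (· ≥ ·)) {x : α} (hx : x ∈ l) : x ≤ l.headI := by
  cases l with
  | nil => cases hx
  | cons a l =>
    rcases mem_cons.mp hx with rfl | hx
    · exact le_rfl
    · exact (pairwise_cons.mp hl).1 x hx

theorem sum_take_le_mul_headI {l : List ℕ} (hl : l.Pairwise (· ≥ ·)) (t : ℕ) :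
    (l.take t).sum ≤ t * l.headI :=
  calc (l.take t).sum ≤ (l.take t).length • l.headI :=
        sum_le_card_nsmul _ _ fun _ hx => le_headI_of_pairwise_ge hl (mem_of_mem_take hx)
    _ ≤ t * l.headI := Nat.mul_le_mul_right _ (length_take_le t l)

theorem sum_take_le_sum_take_of_sum_drop_le {M : Type*} [AddCommMonoid M] [PartialOrder M]
    [IsOrderedCancelAddMonoid M] {l l' : List M} (hsum : l.sum = l'.sum) {t : ℕ}
    (h : (l.drop t).sum ≤ (l'.drop t).sum) : (l'.take t).sum ≤ (l.take t).sum := by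
  refine le_of_add_le_add_right (a := (l.drop t).sum) ?_
  calc (l'.take t).sum + (l.drop t).sum ≤ (l'.take t).sum + (l'.drop t).sum := by gcongr
    _ = (l.take t).sum + (l.drop t).sum := by
      rw [sum_take_add_sum_drop, sum_take_add_sum_drop, hsum]

theorem sum_take_replicate_append {t b : ℕ} (h : t ≤ b) (a : ℕ) (l : List ℕ) :
    ((replicate b a ++ l).take t).sum = t * a := by
  rw [take_append_of_le_length (by simpa using h), take_replicate, sum_replicate, min_eq_left h,
    smul_eq_mul]

theorem headI_replicate_append {α : Type*} [Inhabited α] {b : ℕ} (hb : 0 < b) (a : α)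
    (l : List α) : (replicate b a ++ l).headI = a := by
  obtain ⟨b, rfl⟩ := Nat.exists_eq_succ_of_ne_zero hb.ne'
  rfl

theorem eq_of_mem_drop_replicate_append_cons_replicate {α : Type*} {t b m : ℕ} (h : b < t)
    {a r c x : α} (hx : x ∈ (replicate b a ++ r :: replicate m c).drop t) : x = c := by
  obtain ⟨s, rfl⟩ := Nat.exists_eq_add_of_lt h
  rw [drop_append, drop_eq_nil_of_le (by simp; omega), nil_append, length_replicate,
    show b + s + 1 - b = s + 1 by omega, drop_succ_cons, drop_replicate] at hx
  exact eq_of_mem_replicate hx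

end List

theorem strength_stmt_9_general {n k : ℕ}
    (p q : List ℕ) (hp : IsMotif n p) (hq : IsMotif n q)
    (hplen : p.length = k) (hqlen : q.length = k)
    (hmaj : IsMajorMotif n k p) (hfirst : p.headI = q.headI) :
    Dominates p q := by
  obtain ⟨-, -, hpsum⟩ := hp
  obtain ⟨hqsorted, hqpos, hqsum⟩ := hq
  obtain ⟨lam, -, -, -, hpeq⟩ := hmaj
  rw [majorMotif] at hpeq
  set β := (n - k) / (lam - 1)
  intro t ht _
  rcases le_or_gt t β with hle | hlt
  · calc (q.take t).sum ≤ t * q.headI := List.sum_take_le_mul_headI hqsorted t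
      _ = t * lam := by rw [← hfirst, hpeq, List.headI_replicate_append (by omega)]
      _ = (p.take t).sum := by rw [hpeq, List.sum_take_replicate_append hle]
  · have hones : ∀ x ∈ p.drop t, x = 1 := fun _ hx =>
      List.eq_of_mem_drop_replicate_append_cons_replicate hlt (hpeq ▸ hx)
    refine List.sum_take_le_sum_take_of_sum_drop_le (hpsum.trans hqsum.symm) ?_
    calc (p.drop t).sum = (q.drop t).length := by
          rw [List.sum_eq_card_nsmul _ 1 hones, smul_eq_mul, mul_one, List.length_drop,
            List.length_drop, hplen, hqlen]
      _ ≤ (q.drop t).sum :=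
          List.length_le_sum_of_one_le _ fun x hx => hqpos x (List.mem_of_mem_drop hx)

/-- a major motif of `n` with `k` parts dominates every motif of
`n` with `k` parts having the same first entry. -/
theorem strength_stmt_9 {n k : ℕ} (h1 : 1 ≤ k) (h2 : k ≤ n)
    (p q : List ℕ) (hp : IsMotif n p) (hq : IsMotif n q)
    (hplen : p.length = k) (hqlen : q.length = k)
    (hmaj : IsMajorMotif n k p) (hfirst : p.headI = q.headI) :
    Dominates p q :=
  strength_stmt_9_general p q hp hq hplen hqlen hmaj hfirst
end

section
/- Let n, k be integers with 1 ≤ k ≤ n, and let p and q both be major motifs of n with exactly k parts. If p[1] > q[1], then p dominates q. -/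
namespace List

lemma sum_take_le_mul {l : List ℕ} {c : ℕ} (h : ∀ x ∈ l, x ≤ c) (t : ℕ) :
    (l.take t).sum ≤ t * c :=
  calc (l.take t).sum ≤ (l.take t).length * c := by
        simpa using sum_le_card_nsmul _ c fun x hx ↦ h x (mem_of_mem_take hx)
    _ ≤ t * c := Nat.mul_le_mul_right c (length_take_le t l)

lemma sum_take_add_sub_le_sum {l : List ℕ} (h : ∀ x ∈ l, 0 < x) (t : ℕ) :
    (l.take t).sum + (l.length - t) ≤ l.sum := by
  have hdrop : (l.drop t).length ≤ (l.drop t).sum :=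
    length_le_sum_of_one_le _ fun x hx ↦ h x (mem_of_mem_drop hx)
  rw [length_drop] at hdrop
  rw [← sum_take_add_sum_drop l t]
  omega

lemma sum_take_add_sub_eq_sum {l : List ℕ} {t : ℕ} (h : ∀ x ∈ l.drop t, x = 1) :
    (l.take t).sum + (l.length - t) = l.sum := by
  rw [← sum_take_add_sum_drop l t, eq_replicate_iff.2 ⟨rfl, h⟩]
  simp

lemma Pairwise.le_headI {α : Type*} [Inhabited α] [Preorder α] {l : List α}
    (hl : l.Pairwise (· ≥ ·)) {x : α} (hx : x ∈ l) : x ≤ l.headI := by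
  cases l with
  | nil => simp at hx
  | cons a l =>
    rcases mem_cons.1 hx with rfl | hx
    · exact le_rfl
    · exact rel_of_pairwise_cons hl hx

end List

section MajorMotif

variable {n k lam : ℕ}

lemma one_le_majorMotif_beta (hlam : 1 < lam) (hlam' : lam ≤ n - k + 1) :
    1 ≤ (n - k) / (lam - 1) :=
  (Nat.one_le_div_iff (by omega)).2 (by omega)

lemma headI_majorMotif (hlam : 1 < lam) (hlam' : lam ≤ n - k + 1) :
    (majorMotif n k lam).headI = lam := by
  obtain ⟨b, hb⟩ := Nat.exists_eq_add_of_le' (one_le_majorMotif_beta hlam hlam')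
  simp [majorMotif, hb, List.replicate_succ]

lemma take_majorMotif_of_le {t : ℕ} (ht : t ≤ (n - k) / (lam - 1)) :
    (majorMotif n k lam).take t = List.replicate t lam := by
  simp [majorMotif, List.take_append, List.take_replicate, ht, Nat.sub_eq_zero_of_le ht]

lemma eq_one_of_mem_drop_majorMotif {t : ℕ} (ht : (n - k) / (lam - 1) < t) :
    ∀ x ∈ (majorMotif n k lam).drop t, x = 1 := by
  unfold majorMotif
  generalize (n - k) / (lam - 1) = b at ht ⊢
  obtain ⟨s, rfl⟩ := Nat.exists_eq_add_of_lt ht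
  intro x hx
  rw [add_assoc, List.drop_append, List.drop_eq_nil_of_le (by simp)] at hx
  simp only [List.length_replicate, add_tsub_cancel_left, List.drop_succ_cons,
    List.nil_append] at hx
  exact List.eq_of_mem_replicate (List.mem_of_mem_drop hx)

end MajorMotif

theorem strength_stmt_10_general {n k : ℕ}
    (p q : List ℕ) (hp : IsMotif n p) (hq : IsMotif n q)
    (hplen : p.length = k) (hqlen : q.length = k)
    (hpmaj : IsMajorMotif n k p)
    (hfirst : q.headI < p.headI) :
    Dominates p q := by
  obtain ⟨lam, hlam, -, hlam', rfl⟩ := hpmaj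
  rw [headI_majorMotif hlam hlam'] at hfirst
  have hq_le : ∀ x ∈ q, x ≤ lam - 1 := fun x hx ↦ by
    have := hq.1.le_headI hx
    omega
  intro t _ ht
  rw [hplen, hqlen, min_self] at ht
  rcases le_or_gt t ((n - k) / (lam - 1)) with hle | hgt
  · calc (q.take t).sum ≤ t * (lam - 1) := List.sum_take_le_mul hq_le t
      _ ≤ t * lam := Nat.mul_le_mul_left t (Nat.sub_le lam 1)
      _ = _ := by simp [take_majorMotif_of_le hle]
  · have hp_tail := List.sum_take_add_sub_eq_sum (eq_one_of_mem_drop_majorMotif hgt)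
    have hq_tail := List.sum_take_add_sub_le_sum hq.2.1 t
    rw [hplen, hp.2.2] at hp_tail
    rw [hqlen, hq.2.2] at hq_tail
    omega

/-- if `p` and `q` are both major motifs of `n` with `k` parts
and `p[1] > q[1]`, then `p` dominates `q`. -/
theorem strength_stmt_10 {n k : ℕ} (h1 : 1 ≤ k) (h2 : k ≤ n)
    (p q : List ℕ) (hp : IsMotif n p) (hq : IsMotif n q)
    (hplen : p.length = k) (hqlen : q.length = k)
    (hpmaj : IsMajorMotif n k p) (hqmaj : IsMajorMotif n k q)
    (hfirst : q.headI < p.headI) :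
    Dominates p q :=
  strength_stmt_10_general p q hp hq hplen hqlen hpmaj hfirst
end

section
/- Let n, k be integers with 1 ≤ k ≤ n. If p is a major motif of n with k parts and q is any motif of n with k parts that is strictly smaller than p in the lexicographic order on sequences, then p dominates q. -/
/-- a major motif of `n` with `k` parts dominates every motif of
`n` with `k` parts that is lexicographically strictly smaller. -/
theorem strength_stmt_11 {n k : ℕ} (h1 : 1 ≤ k) (h2 : k ≤ n)
    (p q : List ℕ) (hp : IsMotif n p) (hq : IsMotif n q)
    (hplen : p.length = k) (hqlen : q.length = k)
    (hpmaj : IsMajorMotif n k p) (hlt : List.Lex (· < ·) q p) :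
    Dominates p q := by
  obtain ⟨lam, hlam1, _, _, hpeq⟩ := hpmaj
  set β := (n - k) / (lam - 1) with hβdef
  -- length facts
  have hlen : β + 1 + (k - β - 1) = k := by
    have := hplen
    rw [hpeq] at this
    simp [majorMotif, ← hβdef] at this
    omega
  have hβk : β + 1 ≤ k := by omega
  intro t ht1 ht2
  rw [hplen, hqlen, min_self] at ht2
  by_cases hcase : t ≤ β
  · -- first block: p.take t = replicate t lam
    have hpt : (p.take t).sum = t * lam := by
      rw [hpeq]
      unfold majorMotif
      rw [← hβdef, List.take_append, List.length_replicate,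
        List.take_replicate]
      have h0 : t - β = 0 := by omega
      have h1 : min t β = t := by omega
      simp [h0, h1, List.sum_replicate, mul_comm]
    -- q's head ≤ lam
    obtain ⟨a, q', rfl⟩ : ∃ a q', q = a :: q' := by
      cases q with
      | nil => simp at hqlen; omega
      | cons a q' => exact ⟨a, q', rfl⟩
    have hβpos : 1 ≤ β := le_trans ht1 hcase
    have hphead : ∃ p', p = lam :: p' := by
      rw [hpeq]
      unfold majorMotif
      rw [← hβdef]
      obtain ⟨m, hm⟩ : ∃ m, β = m + 1 := ⟨β - 1, by omega⟩
      rw [hm, List.replicate_succ, List.cons_append]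
      exact ⟨_, rfl⟩
    obtain ⟨p', hp'⟩ := hphead
    have halam : a ≤ lam := by
      rw [hp'] at hlt
      cases hlt with
      | cons h => exact le_refl _
      | rel h => exact le_of_lt h
    have hall : ∀ x ∈ (a :: q').take t, x ≤ lam := by
      intro x hx
      have hx' : x ∈ a :: q' := List.mem_of_mem_take hx
      have : a ≥ x := by
        rcases List.mem_cons.mp hx' with h | h
        · omega
        · exact List.rel_of_pairwise_cons hq.1 h
      omega
    have := List.sum_le_card_nsmul ((a :: q').take t) lam hall
    have hlent : ((a :: q').take t).length = t := by
      rw [List.length_take]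
      omega
    rw [hlent, smul_eq_mul] at this
    omega
  · -- tail: p.drop t is all ones
    push_neg at hcase
    have hpdrop : (p.drop t).sum = k - t := by
      rw [hpeq]
      unfold majorMotif
      rw [← hβdef, List.drop_append, List.length_replicate,
        List.drop_replicate]
      have h0 : β - t = 0 := by omega
      obtain ⟨m, hm⟩ : ∃ m, t - β = m + 1 := ⟨t - β - 1, by omega⟩
      rw [h0, hm]
      simp [List.drop_replicate, List.sum_replicate]
      omega
    have hptake : (p.take t).sum + (p.drop t).sum = n := by
      rw [List.sum_take_add_sum_drop]; exact hp.2.2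
    have hqtake : (q.take t).sum + (q.drop t).sum = n := by
      rw [List.sum_take_add_sum_drop]; exact hq.2.2
    have hqdrop : k - t ≤ (q.drop t).sum := by
      have hall : ∀ x ∈ q.drop t, 1 ≤ x := fun x hx =>
        hq.2.1 x (List.mem_of_mem_drop hx)
      have := List.card_nsmul_le_sum (q.drop t) 1 hall
      rw [smul_eq_mul, mul_one, List.length_drop, hqlen] at this
      exact this
    omega
end

section
/- Let G be a finite simple graph with n vertices, α(G) the maximum cardinality of an independent set of G, and X a proper coloring of G. Let k > |X| be an integer, λ = min(α(G), n−k+1), and let p be the major motif of n with k parts with first entry λ. If Σ(X) < Σ(p), then every proper coloring of G using at least k nonempty colors has weighted sum strictly greater than Σ(X); consequently the chromatic strength satisfies s(G) ≤ k − 1. -/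
/-- The number of (nonempty) colors used by a coloring. -/
def numColors {V : Type*} [Fintype V] [DecidableEq V] (c : V → ℕ) : ℕ :=
  (Finset.univ.image c).card

/-- The independence (stability) number `α(G)`. -/
noncomputable def indepNum {V : Type*} [Fintype V] (G : SimpleGraph V) : ℕ :=
  sSup { m | ∃ s : Finset V, (∀ u ∈ s, ∀ v ∈ s, u ≠ v → ¬ G.Adj u v) ∧ s.card = m }

/-- The weighted sum `Σ(p) = ∑_{i=1}^{|p|} i · p[i]` of a motif. -/
def motifSum (p : List ℕ) : ℕ :=
  ∑ i ∈ Finset.range p.length, (i + 1) * p.getD i 0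

lemma sum_getD (l : List ℕ) : ∑ i ∈ Finset.range l.length, l.getD i 0 = l.sum := by
  induction l with
  | nil => simp
  | cons a l ih =>
    rw [List.length_cons, Finset.sum_range_succ']
    simp only [List.getD_cons_succ, List.getD_cons_zero, ih, List.sum_cons]
    omega

lemma motifSum_cons (a : ℕ) (l : List ℕ) :
    motifSum (a :: l) = a + (l.sum + motifSum l) := by
  unfold motifSum
  rw [List.length_cons, Finset.sum_range_succ']
  simp only [List.getD_cons_succ, List.getD_cons_zero, one_mul]
  rw [Finset.sum_congr rfl (fun i _ => by ring : ∀ i ∈ Finset.range l.length,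
      (i + 1 + 1) * l.getD i 0 = l.getD i 0 + (i+1) * l.getD i 0),
    Finset.sum_add_distrib, sum_getD]
  omega

lemma motifSum_replicate_append (a : ℕ) (l : List ℕ) : ∀ b : ℕ,
    motifSum (List.replicate b a ++ l) =
      b * a + a * (∑ i ∈ Finset.range b, i) + b * l.sum + motifSum l := by
  intro b
  induction b with
  | zero => simp
  | succ b ih =>
    rw [List.replicate_succ, List.cons_append, motifSum_cons, ih,
      List.sum_append, List.sum_replicate, Finset.sum_range_succ]
    simp only [smul_eq_mul]
    ring

lemma motifSum_replicate_one (m : ℕ) :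
    motifSum (List.replicate m 1) = (∑ i ∈ Finset.range m, i) + m := by
  induction m with
  | zero => simp [motifSum]
  | succ m ih =>
    rw [List.replicate_succ, motifSum_cons, ih, List.sum_replicate,
      Finset.sum_range_succ]
    simp only [smul_eq_mul]
    ring

lemma sum_range_sub (b : ℕ) :
    ∑ t ∈ Finset.range b, (b - t) = (∑ t ∈ Finset.range b, t) + b := by
  induction b with
  | zero => simp
  | succ b ih =>
    rw [Finset.sum_range_succ, Finset.sum_range_succ (fun t => t)]
    have h : ∑ t ∈ Finset.range b, (b + 1 - t) = ∑ t ∈ Finset.range b, ((b - t) + 1) :=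
      Finset.sum_congr rfl fun t ht => by rw [Finset.mem_range] at ht; omega
    rw [h]
    simp only [Finset.sum_add_distrib, Finset.sum_const, Finset.card_range, smul_eq_mul, mul_one]
    omega

lemma sum_range_sub' (b : ℕ) :
    ∑ t ∈ Finset.range (b + 1), (b - t) = ∑ t ∈ Finset.range (b + 1), t := by
  have h1 := sum_range_sub (b + 1)
  have h2 : ∑ t ∈ Finset.range (b+1), (b + 1 - t) = ∑ t ∈ Finset.range (b+1), ((b - t) + 1) :=
    Finset.sum_congr rfl fun t ht => by rw [Finset.mem_range] at ht; omega
  rw [h2] at h1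
  simp only [Finset.sum_add_distrib, Finset.sum_const, Finset.card_range, smul_eq_mul, mul_one] at h1
  omega

lemma motifSum_majorMotif_le (n k lam : ℕ)
    (hk : (n - k) / (lam - 1) + 1 ≤ k) (hkn : k ≤ n) :
    motifSum (majorMotif n k lam) ≤ ∑ t ∈ Finset.range k, max (n - t * lam) (k - t) := by
  set β := (n - k) / (lam - 1) with hβ
  have hdiv : β * (lam - 1) ≤ n - k := Nat.div_mul_le_self _ _
  have hmul : β * lam ≤ β * (lam - 1) + β := by
    rcases Nat.eq_zero_or_pos lam with h | h
    · simp [h]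
    · have h2 : β * ((lam - 1) + 1) = β * (lam - 1) + β := by ring
      rw [Nat.sub_add_cancel h] at h2
      omega
  obtain ⟨m, hm⟩ : ∃ m, k = β + 1 + m := ⟨k - β - 1, by omega⟩
  have hβlam : β * lam + m + 1 ≤ n := by omega
  obtain ⟨r, hr⟩ : ∃ r, n = r + (β * lam + m) := ⟨n - (β * lam + m), by omega⟩
  have hm' : k - β - 1 = m := by omega
  have hrval : n - β * lam - m = r := by omega
  have hT : (r :: List.replicate m 1).sum = r + m := by
    simp [List.sum_replicate]
  have hLHS : motifSum (majorMotif n k lam) =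
      β * lam + lam * (∑ i ∈ Finset.range β, i) + β * (r + m)
        + (r + ((∑ i ∈ Finset.range m, i) + m + m)) := by
    rw [majorMotif, ← hβ, hm', hrval, motifSum_replicate_append, hT, motifSum_cons,
      List.sum_replicate, motifSum_replicate_one]
    simp only [smul_eq_mul]
    ring
  have hRHS : ((β + 1) * (r + m) + lam * ((∑ i ∈ Finset.range β, i) + β))
        + ((∑ i ∈ Finset.range m, i) + m) ≤
      ∑ t ∈ Finset.range k, max (n - t * lam) (k - t) := by
    rw [hm, Finset.sum_range_add]
    refine Nat.add_le_add ?_ ?_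
    · have h1 : ∀ t ∈ Finset.range (β + 1),
          (r + m) + (β - t) * lam ≤ max (n - t * lam) (β + 1 + m - t) := by
        intro t ht
        rw [Finset.mem_range] at ht
        refine le_max_of_le_left ?_
        have h2 : β * lam = t * lam + (β - t) * lam := by
          rw [← Nat.add_mul, Nat.add_sub_cancel' (by omega)]
        omega
      calc (β + 1) * (r + m) + lam * ((∑ i ∈ Finset.range β, i) + β)
          = ∑ t ∈ Finset.range (β + 1), ((r + m) + (β - t) * lam) := by
            simp only [Finset.sum_add_distrib, Finset.sum_const, Finset.card_range,
              smul_eq_mul, ← Finset.sum_mul, sum_range_sub']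
            rw [Finset.sum_range_succ]
            ring
        _ ≤ _ := Finset.sum_le_sum h1
    · have h1 : ∀ j ∈ Finset.range m,
          (m - j) ≤ max (n - (β + 1 + j) * lam) (β + 1 + m - (β + 1 + j)) :=
        fun j hj => le_max_of_le_right (by omega)
      calc (∑ i ∈ Finset.range m, i) + m
          = ∑ j ∈ Finset.range m, (m - j) := (sum_range_sub m).symm
        _ ≤ _ := Finset.sum_le_sum h1
  rw [hLHS]
  exact le_trans (le_of_eq (by ring)) hRHS

section
variable {V : Type*} [Fintype V] [DecidableEq V] (G : SimpleGraph V)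
set_option linter.unusedSectionVars false

lemma indepSet_bddAbove :
    BddAbove { m | ∃ s : Finset V, (∀ u ∈ s, ∀ v ∈ s, u ≠ v → ¬ G.Adj u v) ∧ s.card = m } := by
  refine ⟨Fintype.card V, fun m hm => ?_⟩
  obtain ⟨s, -, rfl⟩ := hm
  exact s.card_le_univ.trans_eq (Finset.card_univ)

lemma fiber_card_le_indepNum (c : V → ℕ) (hc : IsProperColoring G c) (j : ℕ) :
    (Finset.univ.filter fun v => c v = j).card ≤ indepNum G := by
  refine le_csSup (indepSet_bddAbove G) ⟨_, fun u hu v hv huv hadj => ?_, rfl⟩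
  rw [Finset.mem_filter] at hu hv
  exact hc.1 u v hadj (hu.2.trans hv.2.symm)

lemma card_le_numColors_mul (c : V → ℕ) (hc : IsProperColoring G c) :
    Fintype.card V ≤ numColors c * indepNum G := by
  have hcover : (Finset.univ : Finset V) ⊆
      (Finset.univ.image c).biUnion (fun j => Finset.univ.filter fun v => c v = j) := by
    intro v _
    exact Finset.mem_biUnion.2 ⟨c v, Finset.mem_image_of_mem c (Finset.mem_univ v),
      Finset.mem_filter.2 ⟨Finset.mem_univ v, rfl⟩⟩
  calc Fintype.card V = (Finset.univ : Finset V).card := Finset.card_univ.symm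
    _ ≤ ((Finset.univ.image c).biUnion (fun j => Finset.univ.filter fun v => c v = j)).card :=
        Finset.card_le_card hcover
    _ ≤ ∑ j ∈ Finset.univ.image c, (Finset.univ.filter fun v => c v = j).card :=
        Finset.card_biUnion_le
    _ ≤ ∑ _j ∈ Finset.univ.image c, indepNum G :=
        Finset.sum_le_sum fun j _ => fiber_card_le_indepNum G c hc j
    _ = numColors c * indepNum G := by rw [Finset.sum_const, smul_eq_mul, numColors]

lemma indepNum_pos [Nonempty V] : 1 ≤ indepNum G := by
  refine le_csSup (indepSet_bddAbove G) ⟨{Classical.arbitrary V}, ?_, Finset.card_singleton _⟩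
  intro u hu v hv huv
  rw [Finset.mem_singleton] at hu hv
  exact absurd (hu.trans hv.symm) huv

lemma sum_levels (c' : V → ℕ) (hpos : ∀ v, 1 ≤ c' v) (N : ℕ) (hN : ∀ v, c' v ≤ N) :
    ∑ v, c' v = ∑ t ∈ Finset.range N, (Finset.univ.filter fun v => t < c' v).card := by
  have key : ∀ v, c' v = ∑ t ∈ Finset.range N, if t < c' v then 1 else 0 := by
    intro v
    rw [Finset.sum_boole]
    have h : (Finset.range N).filter (fun t => t < c' v) = Finset.range (c' v) := by
      ext t
      simp only [Finset.mem_filter, Finset.mem_range]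
      exact ⟨fun h => h.2, fun h => ⟨h.trans_le (hN v), h⟩⟩
    rw [h, Finset.card_range, Nat.cast_id]
  calc ∑ v, c' v = ∑ v, ∑ t ∈ Finset.range N, if t < c' v then 1 else 0 :=
        Finset.sum_congr rfl fun v _ => key v
    _ = ∑ t ∈ Finset.range N, ∑ v, if t < c' v then (1:ℕ) else 0 := Finset.sum_comm
    _ = ∑ t ∈ Finset.range N, (Finset.univ.filter fun v => t < c' v).card := by
        refine Finset.sum_congr rfl fun t _ => ?_
        rw [Finset.sum_boole, Nat.cast_id]

lemma level_card_ge_colors (c' : V → ℕ) (hpos : ∀ v, 1 ≤ c' v) (k t : ℕ)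
    (hk : k ≤ numColors c') :
    k - t ≤ (Finset.univ.filter fun v => t < c' v).card := by
  have hsub : Finset.univ.image c' ⊆
      ((Finset.univ.filter fun v => t < c' v).image c') ∪ Finset.Icc 1 t := by
    intro x hx
    obtain ⟨v, -, rfl⟩ := Finset.mem_image.1 hx
    rcases lt_or_ge t (c' v) with h | h
    · exact Finset.mem_union_left _
        (Finset.mem_image_of_mem c' (Finset.mem_filter.2 ⟨Finset.mem_univ v, h⟩))
    · exact Finset.mem_union_right _ (Finset.mem_Icc.2 ⟨hpos v, h⟩)
  have h1 := Finset.card_le_card hsub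
  have h2 := Finset.card_union_le
    ((Finset.univ.filter fun v => t < c' v).image c') (Finset.Icc 1 t)
  have h3 := Finset.card_image_le (s := Finset.univ.filter fun v => t < c' v) (f := c')
  have h4 : (Finset.Icc 1 t).card = t := by rw [Nat.card_Icc]; omega
  unfold numColors at hk
  omega

lemma level_card_ge_size (c' : V → ℕ) (hpos : ∀ v, 1 ≤ c' v) (lam t : ℕ)
    (hfib : ∀ j, (Finset.univ.filter fun v => c' v = j).card ≤ lam) :
    Fintype.card V - t * lam ≤ (Finset.univ.filter fun v => t < c' v).card := by
  have hsplit := Finset.card_filter_add_card_filter_not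
    (s := Finset.univ) (p := fun v => t < c' v)
  have hsub : (Finset.univ.filter fun v => ¬ t < c' v) ⊆
      (Finset.Icc 1 t).biUnion (fun j => Finset.univ.filter fun v => c' v = j) := by
    intro v hv
    rw [Finset.mem_filter, not_lt] at hv
    exact Finset.mem_biUnion.2 ⟨c' v, Finset.mem_Icc.2 ⟨hpos v, hv.2⟩,
      Finset.mem_filter.2 ⟨Finset.mem_univ v, rfl⟩⟩
  have h1 : (Finset.univ.filter fun v => ¬ t < c' v).card ≤ t * lam := by
    calc (Finset.univ.filter fun v => ¬ t < c' v).card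
        ≤ ∑ j ∈ Finset.Icc 1 t, (Finset.univ.filter fun v => c' v = j).card :=
          (Finset.card_le_card hsub).trans Finset.card_biUnion_le
      _ ≤ ∑ _j ∈ Finset.Icc 1 t, lam := Finset.sum_le_sum fun j _ => hfib j
      _ = t * lam := by rw [Finset.sum_const, smul_eq_mul, Nat.card_Icc]; congr 1
  have h2 : (Finset.univ : Finset V).card = Fintype.card V := Finset.card_univ
  omega

lemma fiber_card_le_nk (c' : V → ℕ) (k : ℕ) (hk : k ≤ numColors c') (j : ℕ) :
    (Finset.univ.filter fun v => c' v = j).card ≤ Fintype.card V - k + 1 := by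
  have hsub : Finset.univ.image c' ⊆
      ((Finset.univ.filter fun v => ¬ c' v = j).image c') ∪ {j} := by
    intro x hx
    obtain ⟨v, -, rfl⟩ := Finset.mem_image.1 hx
    by_cases h : c' v = j
    · exact Finset.mem_union_right _ (Finset.mem_singleton.2 h)
    · exact Finset.mem_union_left _
        (Finset.mem_image_of_mem c' (Finset.mem_filter.2 ⟨Finset.mem_univ v, h⟩))
  have h1 := Finset.card_le_card hsub
  have h2 := Finset.card_union_le
    ((Finset.univ.filter fun v => ¬ c' v = j).image c') ({j} : Finset ℕ)
  have h3 := Finset.card_image_le (s := Finset.univ.filter fun v => ¬ c' v = j) (f := c')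
  have hsplit := Finset.card_filter_add_card_filter_not
    (s := Finset.univ) (p := fun v => c' v = j)
  have h4 : ({j} : Finset ℕ).card = 1 := Finset.card_singleton j
  have h5 : (Finset.univ : Finset V).card = Fintype.card V := Finset.card_univ
  unfold numColors at hk
  omega

lemma numColors_le_card (c' : V → ℕ) : numColors c' ≤ Fintype.card V :=
  (Finset.card_image_le).trans_eq Finset.card_univ

end


/-- with `n = |V|`, `λ = min (α(G)) (n − k + 1)`, `k > |X|` and
`p` the major motif of `n` with `k` parts and first entry `λ`, if
`Σ(X) < Σ(p)` then every proper coloring using at least `k` nonempty colors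
has weighted sum strictly greater than `Σ(X)`, and `s(G) ≤ k − 1`. -/
theorem strength_stmt_14 {V : Type*} [Fintype V] [DecidableEq V]
    (G : SimpleGraph V) (c : V → ℕ) (hc : IsProperColoring G c)
    (k : ℕ) (hk : numColors c < k)
    (lam : ℕ) (hlam : lam = min (indepNum G) (Fintype.card V - k + 1))
    (p : List ℕ) (hp : p = majorMotif (Fintype.card V) k lam)
    (hlt : ∑ v, c v < motifSum p) :
    (∀ c' : V → ℕ, IsProperColoring G c' → k ≤ numColors c' →
      ∑ v, c v < ∑ v, c' v) ∧
    strength G ≤ k - 1 := by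
  have hkn0 : 1 ≤ k := by omega
  have part1 : ∀ c' : V → ℕ, IsProperColoring G c' → k ≤ numColors c' →
      motifSum p ≤ ∑ v, c' v := by
    intro c' hc' hk'
    have hkn : k ≤ Fintype.card V := hk'.trans (numColors_le_card c')
    have hV : Nonempty V := by
      rcases isEmpty_or_nonempty V with h | h
      · exfalso
        have hcard : Fintype.card V = 0 := Fintype.card_eq_zero
        omega
      · exact h
    have hk2 : 2 ≤ k := by
      have h1 : 1 ≤ numColors c :=
        Finset.card_pos.2 (Finset.Nonempty.image Finset.univ_nonempty c)
      omega
    have hα1 : 1 ≤ indepNum G := indepNum_pos G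
    have hnα : Fintype.card V ≤ (k - 1) * indepNum G := by
      have h1 := card_le_numColors_mul G c hc
      have h2 : numColors c * indepNum G ≤ (k - 1) * indepNum G :=
        Nat.mul_le_mul_right _ (by omega)
      omega
    set n := Fintype.card V with hn
    have hβ : (n - k) / (lam - 1) + 1 ≤ k := by
      rcases le_or_gt lam 1 with h | h
      · have h0 : lam - 1 = 0 := by omega
        rw [h0, Nat.div_zero]
        omega
      · rcases le_total (indepNum G) (n - k + 1) with hmin | hmin
        · have hlam' : lam = indepNum G := by rw [hlam]; exact min_eq_left hmin
          have hdiv : (n - k) / (lam - 1) < k - 1 := by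
            rw [Nat.div_lt_iff_lt_mul (by omega : 0 < lam - 1)]
            have e1 : (k - 1) * lam = (k - 1) * (lam - 1) + (k - 1) := by
              have e2 : lam - 1 + 1 = lam := by omega
              calc (k - 1) * lam = (k - 1) * ((lam - 1) + 1) := by rw [e2]
                _ = (k - 1) * (lam - 1) + (k - 1) := by ring
            have e3 : n ≤ (k - 1) * lam := by rw [hlam']; exact hnα
            omega
          omega
        · have hlam' : lam = n - k + 1 := by rw [hlam]; exact min_eq_right hmin
          have hnk1 : 1 ≤ n - k := by omega
          have e4 : lam - 1 = n - k := by omega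
          have e5 : (n - k) / (lam - 1) = 1 := by rw [e4, Nat.div_self hnk1]
          omega
    have hfib : ∀ j, (Finset.univ.filter fun v => c' v = j).card ≤ lam := by
      intro j
      rw [hlam]
      exact le_min (fiber_card_le_indepNum G c' hc' j) (fiber_card_le_nk c' k hk' j)
    set N := max k (Finset.univ.sup c') with hN
    have hNb : ∀ v, c' v ≤ N := fun v =>
      le_max_of_le_right (Finset.le_sup (Finset.mem_univ v))
    rw [hp, sum_levels c' hc'.2 N hNb]
    calc motifSum (majorMotif n k lam)
        ≤ ∑ t ∈ Finset.range k, max (n - t * lam) (k - t) :=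
          motifSum_majorMotif_le n k lam hβ hkn
      _ ≤ ∑ t ∈ Finset.range k, (Finset.univ.filter fun v => t < c' v).card :=
          Finset.sum_le_sum fun t _ =>
            max_le (level_card_ge_size c' hc'.2 lam t hfib)
              (level_card_ge_colors c' hc'.2 k t hk')
      _ ≤ ∑ t ∈ Finset.range N, (Finset.univ.filter fun v => t < c' v).card :=
          Finset.sum_le_sum_of_subset (Finset.range_subset_range.2 (le_max_left _ _))
  refine ⟨fun c' hc' hk' => lt_of_lt_of_le hlt (part1 c' hc' hk'), ?_⟩
  have hne : {s | ∃ c0 : V → ℕ, IsProperColoring G c0 ∧ s = ∑ v, c0 v}.Nonempty :=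
    ⟨_, c, hc, rfl⟩
  obtain ⟨c₀, hc₀, hsum⟩ :
      ∃ c0 : V → ℕ, IsProperColoring G c0 ∧ chromaticSum G = ∑ v, c0 v :=
    Nat.sInf_mem hne
  have hle : chromaticSum G ≤ ∑ v, c v := Nat.sInf_le ⟨c, hc, rfl⟩
  have hnum : numColors c₀ < k := by
    by_contra hcon
    push_neg at hcon
    have h1 := part1 c₀ hc₀ hcon
    omega
  have hbound : ∀ v, c₀ v ≤ k - 1 := by
    by_contra hcon
    push_neg at hcon
    obtain ⟨v₀, hv₀⟩ := hcon
    have hV : Nonempty V := ⟨v₀⟩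
    set M := Finset.univ.sup c₀ with hM
    have hMv : c₀ v₀ ≤ M := Finset.le_sup (Finset.mem_univ v₀)
    have hMk : k ≤ M := by omega
    obtain ⟨w, -, hw⟩ := Finset.exists_mem_eq_sup Finset.univ Finset.univ_nonempty c₀
    have hex : ∃ j' ∈ Finset.Icc 1 (k - 1), j' ∉ Finset.univ.image c₀ := by
      by_contra hcon2
      push_neg at hcon2
      have hins : insert M (Finset.Icc 1 (k - 1)) ⊆ Finset.univ.image c₀ := by
        intro x hx
        rcases Finset.mem_insert.1 hx with rfl | hx
        · exact Finset.mem_image.2 ⟨w, Finset.mem_univ w, hw.symm⟩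
        · exact hcon2 x hx
      have hcard := Finset.card_le_card hins
      rw [Finset.card_insert_of_notMem
        (by rw [Finset.mem_Icc]; omega), Nat.card_Icc] at hcard
      unfold numColors at hnum
      omega
    obtain ⟨j', hj'I, hj'⟩ := hex
    rw [Finset.mem_Icc] at hj'I
    set c₁ : V → ℕ := fun v => if c₀ v = M then j' else c₀ v with hc₁
    have hc₁p : IsProperColoring G c₁ := by
      constructor
      · intro u v hadj
        have hne2 := hc₀.1 u v hadj
        simp only [hc₁]
        by_cases hu : c₀ u = M <;> by_cases hv : c₀ v = M
        · exact absurd (hu.trans hv.symm) hne2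
        · simp only [if_pos hu, if_neg hv]
          intro h
          exact hj' (by rw [h]; exact Finset.mem_image_of_mem c₀ (Finset.mem_univ v))
        · simp only [if_neg hu, if_pos hv]
          intro h
          exact hj' (by rw [← h]; exact Finset.mem_image_of_mem c₀ (Finset.mem_univ u))
        · simpa only [if_neg hu, if_neg hv] using hne2
      · intro v
        simp only [hc₁]
        by_cases hv : c₀ v = M
        · simp only [if_pos hv]; omega
        · simp only [if_neg hv]; exact hc₀.2 v
    have hlt2 : ∑ v, c₁ v < ∑ v, c₀ v := by
      refine Finset.sum_lt_sum (fun v _ => ?_) ⟨w, Finset.mem_univ w, ?_⟩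
      · simp only [hc₁]
        by_cases hv : c₀ v = M
        · simp only [if_pos hv]; omega
        · simp only [if_neg hv]; exact le_rfl
      · simp only [hc₁, if_pos hw.symm]
        split_ifs <;> omega
    have h9 : chromaticSum G ≤ ∑ v, c₁ v := Nat.sInf_le ⟨c₁, hc₁p, rfl⟩
    omega
  exact Nat.sInf_le ⟨c₀, hc₀, hbound, hsum.symm⟩
end
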